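/- arXiv:2405.16611 — 4 statements merged into one kernel-verified Lean document; each statement's English description precedes it below -/
import Mathlib

section
/- Each of the memory models SCM, TSO, and RA is well-behaved; that is, for each M ∈ {SCM, TSO, RA} there exists a simulation R from SCM to M whose codomain consists solely of stable states of M. -/
set_option autoImplicit false

namespace WMM

universe u v

/-! ### Memory actions and events -/

inductive MemAct (Var Val : Type) : Type where
  | write (x : Var) (v : Val)
  | read (x : Var) (v : Val)
  | rmw (x : Var) (vold vnew : Val)
  | fence

structure MemEv (Proc Var Val : Type) : Type where
  proc : Proc
  act : MemAct Var Val

section Mem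

variable {Proc Var Val : Type}

def MemEv.isWrite (e : MemEv Proc Var Val) : Prop := ∃ x v, e.act = MemAct.write x v
def MemEv.isRead (e : MemEv Proc Var Val) : Prop := ∃ x v, e.act = MemAct.read x v
def MemEv.isRMW (e : MemEv Proc Var Val) : Prop := ∃ x v w, e.act = MemAct.rmw x v w
def MemEv.isFence (e : MemEv Proc Var Val) : Prop := e.act = MemAct.fence

/-- The set of processes appearing in an observable memory sequence. -/
def memProcs (σ : List (MemEv Proc Var Val)) : Set Proc := {p | ∃ e ∈ σ, MemEv.proc e = p}

end Mem

/-! ### Shuffles -/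

/-- `Shuffle s1 s2 s` means `s` is an interleaving of `s1` and `s2`. -/
inductive Shuffle {α : Type u} : List α → List α → List α → Prop where
  | nil : Shuffle [] [] []
  | left {s1 s2 s : List α} (x : α) : Shuffle s1 s2 s → Shuffle (s1 ++ [x]) s2 (s ++ [x])
  | right {s1 s2 s : List α} (x : α) : Shuffle s1 s2 s → Shuffle s1 (s2 ++ [x]) (s ++ [x])

/-! ### Paths of a labeled transition relation -/

inductive LTSPath {S : Type u} {L : Type v} (step : S → L → S → Prop) : S → List L → S → Prop where
  | nil (s : S) : LTSPath step s [] s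
  | cons {s s' s'' : S} {l : L} {ls : List L} :
      step s l s' → LTSPath step s' ls s'' → LTSPath step s (l :: ls) s''

/-! ### Memory models -/

/-- A memory model: an LTS whose labels are memory events or the silent label `τ = none`. -/
structure MemModel (Proc Var Val : Type) : Type 1 where
  State : Type
  init : State
  step : State → Option (MemEv Proc Var Val) → State → Prop

section MemModel

variable {Proc Var Val : Type}

/-- A state is stable if no silent (`τ`) transition is enabled. -/
def MemModel.Stable (M : MemModel Proc Var Val) (q : M.State) : Prop :=
  ∀ q', ¬ M.step q none q'

/-- Observable memory sequences from a state: traces with `τ` steps erased. -/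
def MemModel.OTraces (M : MemModel Proc Var Val) (q : M.State) :
    Set (List (MemEv Proc Var Val)) :=
  {σ | ∃ (π : List (Option (MemEv Proc Var Val))) (q' : M.State),
      LTSPath M.step q π q' ∧ π.reduceOption = σ}

def WeaklyMergeable (M : MemModel Proc Var Val) (σ1 σ2 : List (MemEv Proc Var Val)) : Prop :=
  ∀ q0 : M.State, M.Stable q0 → σ1 ∈ M.OTraces q0 → σ2 ∈ M.OTraces q0 →
    ∃ σ, Shuffle σ1 σ2 σ ∧ σ ∈ M.OTraces q0

def StronglyMergeable (M : MemModel Proc Var Val) (σ1 σ2 : List (MemEv Proc Var Val)) : Prop :=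
  ∀ q0 : M.State, M.Stable q0 → σ1 ∈ M.OTraces q0 → σ2 ∈ M.OTraces q0 →
    ∀ σ, Shuffle σ1 σ2 σ → σ ∈ M.OTraces q0

/-- Weak/strong mergeability, selected by a Boolean flag. -/
def MemMergeable (strong : Bool) (M : MemModel Proc Var Val)
    (σ1 σ2 : List (MemEv Proc Var Val)) : Prop :=
  if strong then StronglyMergeable M σ1 σ2 else WeaklyMergeable M σ1 σ2

end MemModel

/-! ### The SCM, TSO and RA memory models -/

section Models

variable (Proc Var Val : Type)

inductive SCMStep [DecidableEq Var] :
    (Var → Val) → Option (MemEv Proc Var Val) → (Var → Val) → Prop where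
  | write (m : Var → Val) (p : Proc) (x : Var) (v : Val) :
      SCMStep m (some ⟨p, MemAct.write x v⟩) (Function.update m x v)
  | read (m : Var → Val) (p : Proc) (x : Var) :
      SCMStep m (some ⟨p, MemAct.read x (m x)⟩) m
  | rmw (m : Var → Val) (p : Proc) (x : Var) (vnew : Val) :
      SCMStep m (some ⟨p, MemAct.rmw x (m x) vnew⟩) (Function.update m x vnew)
  | fence (m : Var → Val) (p : Proc) :
      SCMStep m (some ⟨p, MemAct.fence⟩) m

def SCMModel [DecidableEq Var] [Zero Val] : MemModel Proc Var Val where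
  State := Var → Val
  init := fun _ => 0
  step := SCMStep Proc Var Val

inductive TSOStep [DecidableEq Proc] [DecidableEq Var] :
    (Var → Val) × (Proc → List (Var × Val)) → Option (MemEv Proc Var Val) →
      (Var → Val) × (Proc → List (Var × Val)) → Prop where
  | write (m : Var → Val) (b : Proc → List (Var × Val)) (p : Proc) (x : Var) (v : Val) :
      TSOStep (m, b) (some ⟨p, MemAct.write x v⟩)
        (m, Function.update b p (b p ++ [(x, v)]))
  | readBuffer (m : Var → Val) (b : Proc → List (Var × Val)) (p : Proc) (x : Var) (v : Val) :
      ((b p).filter (fun pr => decide (pr.1 = x))).getLast? = some (x, v) →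
      TSOStep (m, b) (some ⟨p, MemAct.read x v⟩) (m, b)
  | readMemory (m : Var → Val) (b : Proc → List (Var × Val)) (p : Proc) (x : Var) :
      (b p).filter (fun pr => decide (pr.1 = x)) = [] →
      TSOStep (m, b) (some ⟨p, MemAct.read x (m x)⟩) (m, b)
  | rmw (m : Var → Val) (b : Proc → List (Var × Val)) (p : Proc) (x : Var) (vnew : Val) :
      b p = [] →
      TSOStep (m, b) (some ⟨p, MemAct.rmw x (m x) vnew⟩) (Function.update m x vnew, b)
  | fence (m : Var → Val) (b : Proc → List (Var × Val)) (p : Proc) :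
      b p = [] → TSOStep (m, b) (some ⟨p, MemAct.fence⟩) (m, b)
  | propagate (m : Var → Val) (b : Proc → List (Var × Val)) (p : Proc) (x : Var) (v : Val)
      (β : List (Var × Val)) :
      b p = (x, v) :: β →
      TSOStep (m, b) none (Function.update m x v, Function.update b p β)

def TSOModel [DecidableEq Proc] [DecidableEq Var] [Zero Val] : MemModel Proc Var Val where
  State := (Var → Val) × (Proc → List (Var × Val))
  init := (fun _ => 0, fun _ => [])
  step := TSOStep Proc Var Val

/-- A message of the RA memory model. -/
structure RAMsg (Var Val : Type) : Type where
  var : Var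
  val : Val
  time : ℕ
  view : Var → ℕ

structure RAState (Proc Var Val : Type) : Type where
  mem : Set (RAMsg Var Val)
  view : Proc → Var → ℕ
  fview : Var → ℕ

end Models

/-- Pointwise join (maximum) of two views. -/
def viewJoin {Var : Type} (V1 V2 : Var → ℕ) : Var → ℕ := fun y => max (V1 y) (V2 y)

section RA

variable (Proc Var Val : Type)

inductive RAStep [DecidableEq Proc] [DecidableEq Var] :
    RAState Proc Var Val → Option (MemEv Proc Var Val) → RAState Proc Var Val → Prop where
  | write (s : RAState Proc Var Val) (p : Proc) (x : Var) (v : Val) (t : ℕ) :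
      s.view p x < t →
      (∀ μ ∈ s.mem, μ.var = x → μ.time ≠ t) →
      RAStep s (some ⟨p, MemAct.write x v⟩)
        ⟨insert ⟨x, v, t, Function.update (s.view p) x t⟩ s.mem,
         Function.update s.view p (Function.update (s.view p) x t), s.fview⟩
  | read (s : RAState Proc Var Val) (p : Proc) (x : Var) (v : Val) (V : Var → ℕ) :
      (⟨x, v, s.view p x, V⟩ : RAMsg Var Val) ∈ s.mem →
      RAStep s (some ⟨p, MemAct.read x v⟩) s
  | rmw (s : RAState Proc Var Val) (p : Proc) (x : Var) (vexp vnew : Val) (V : Var → ℕ) :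
      (⟨x, vexp, s.view p x, V⟩ : RAMsg Var Val) ∈ s.mem →
      (∀ μ ∈ s.mem, μ.var = x → μ.time ≠ s.view p x + 1) →
      RAStep s (some ⟨p, MemAct.rmw x vexp vnew⟩)
        ⟨insert ⟨x, vnew, s.view p x + 1, Function.update (s.view p) x (s.view p x + 1)⟩ s.mem,
         Function.update s.view p (Function.update (s.view p) x (s.view p x + 1)), s.fview⟩
  | fence (s : RAState Proc Var Val) (p : Proc) :
      RAStep s (some ⟨p, MemAct.fence⟩)
        ⟨s.mem, Function.update s.view p (viewJoin (s.view p) s.fview),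
         viewJoin (s.view p) s.fview⟩
  | propagate (s : RAState Proc Var Val) (p : Proc) (μ : RAMsg Var Val) :
      μ ∈ s.mem → s.view p μ.var < μ.time →
      RAStep s none
        ⟨s.mem, Function.update s.view p (viewJoin (s.view p) μ.view), s.fview⟩

def RAModel [DecidableEq Proc] [DecidableEq Var] [Zero Val] : MemModel Proc Var Val where
  State := RAState Proc Var Val
  init := ⟨{μ | ∃ x : Var, μ = ⟨x, 0, 0, fun _ => 0⟩}, fun _ _ => 0, fun _ => 0⟩
  step := RAStep Proc Var Val

end RA

/-! ### Well-behaved memory models -/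

section WellBehaved

variable {Proc Var Val : Type}

/-- Reachability by silent steps. -/
def TauReach (M : MemModel Proc Var Val) : M.State → M.State → Prop :=
  Relation.ReflTransGen (fun q q' => M.step q none q')

/-- A memory model is well-behaved if there is a simulation from SCM into its stable states. -/
def WellBehaved [DecidableEq Var] [Zero Val] (M : MemModel Proc Var Val) : Prop :=
  ∃ R : (Var → Val) → M.State → Prop,
    (∀ m q, R m q → M.Stable q) ∧
    R (fun _ => (0 : Val)) M.init ∧
    (∀ m q, R m q → ∀ (l : Option (MemEv Proc Var Val)) (m' : Var → Val),
      SCMStep Proc Var Val m l m' →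
      ∃ q1 q' : M.State, M.step q l q1 ∧ TauReach M q1 q' ∧ M.Stable q' ∧ R m' q')

end WellBehaved

/-! ### Patterns of observable memory sequences -/

section Patterns

variable {Proc Var Val : Type}

def IsSolo (σ : List (MemEv Proc Var Val)) : Prop :=
  ∀ e ∈ σ, ∀ e' ∈ σ, MemEv.proc e = MemEv.proc e'

def IsRW (σ : List (MemEv Proc Var Val)) : Prop :=
  ∀ e ∈ σ, MemEv.isWrite e ∨ MemEv.isRead e

def IsRWF (σ : List (MemEv Proc Var Val)) : Prop :=
  ∀ e ∈ σ, MemEv.isWrite e ∨ MemEv.isRead e ∨ MemEv.isFence e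

/-- Read-before-write: no read-after-write pattern on distinct variables. -/
def IsRBW (σ : List (MemEv Proc Var Val)) : Prop :=
  ∀ (k1 k2 : ℕ) (e1 e2 : MemEv Proc Var Val) (x y : Var) (v w : Val),
    k1 < k2 → σ[k1]? = some e1 → σ[k2]? = some e2 →
    e1.act = MemAct.write x v → e2.act = MemAct.read y w → x ≠ y →
    ∃ (k : ℕ) (e : MemEv Proc Var Val) (u : Val),
      k1 < k ∧ k < k2 ∧ σ[k]? = some e ∧ e.act = MemAct.write y u

/-- Trailing-fence: no fence is immediately followed by a non-fence event. -/
def IsTF (σ : List (MemEv Proc Var Val)) : Prop :=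
  ∀ (k : ℕ) (e e' : MemEv Proc Var Val),
    σ[k]? = some e → σ[k + 1]? = some e' → MemEv.isFence e → MemEv.isFence e'

/-- Leading-fence: no fence is immediately preceded by a non-fence event. -/
def IsLF (σ : List (MemEv Proc Var Val)) : Prop :=
  ∀ (k : ℕ) (e e' : MemEv Proc Var Val),
    σ[k]? = some e → σ[k + 1]? = some e' → MemEv.isFence e' → MemEv.isFence e

def IsLTF (σ : List (MemEv Proc Var Val)) : Prop :=
  ∃ σ' σ'' : List (MemEv Proc Var Val), σ = σ' ++ σ'' ∧ IsLF σ' ∧ IsTF σ''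

def IsPPTF [DecidableEq Proc] (σ : List (MemEv Proc Var Val)) : Prop :=
  ∀ p : Proc, IsTF (σ.filter (fun e => decide (e.proc = p)))

def IsPPLF [DecidableEq Proc] (σ : List (MemEv Proc Var Val)) : Prop :=
  ∀ p : Proc, IsLF (σ.filter (fun e => decide (e.proc = p)))

end Patterns

/-! ### Objects, events and histories -/

inductive ObjAct (Op Ret : Type) : Type where
  | inv (o : Op)
  | res (u : Ret)

structure ObjEv (Proc Op Ret : Type) : Type where
  proc : Proc
  act : ObjAct Op Ret

inductive EvAct (Var Val Op Ret : Type) : Type where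
  | mem (a : MemAct Var Val)
  | inv (o : Op)
  | res (u : Ret)

/-- A general event: a memory event or an object event of some process. -/
structure Ev (Proc Var Val Op Ret : Type) : Type where
  proc : Proc
  act : EvAct Var Val Op Ret

section Events

variable {Proc Var Val Op Ret : Type}

def ObjAct.isInv : ObjAct Op Ret → Prop
  | ObjAct.inv _ => True
  | _ => False

def ObjAct.isRes : ObjAct Op Ret → Prop
  | ObjAct.res _ => True
  | _ => False

def Ev.toMem : Ev Proc Var Val Op Ret → Option (MemEv Proc Var Val)
  | ⟨p, EvAct.mem a⟩ => some ⟨p, a⟩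
  | _ => none

def Ev.toObj : Ev Proc Var Val Op Ret → Option (ObjEv Proc Op Ret)
  | ⟨p, EvAct.inv o⟩ => some ⟨p, ObjAct.inv o⟩
  | ⟨p, EvAct.res u⟩ => some ⟨p, ObjAct.res u⟩
  | _ => none

/-- Restriction of an event sequence to its memory events. -/
def restrictMem (π : List (Ev Proc Var Val Op Ret)) : List (MemEv Proc Var Val) :=
  π.filterMap Ev.toMem

/-- Restriction of an event sequence to its object events. -/
def restrictObj (π : List (Ev Proc Var Val Op Ret)) : List (ObjEv Proc Op Ret) :=
  π.filterMap Ev.toObj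

def procsEv (π : List (Ev Proc Var Val Op Ret)) : Set Proc := {p | ∃ e ∈ π, Ev.proc e = p}

def procsObj (h : List (ObjEv Proc Op Ret)) : Set Proc := {p | ∃ e ∈ h, ObjEv.proc e = p}

def Ev.isWriteEv (e : Ev Proc Var Val Op Ret) : Prop :=
  ∃ x v, e.act = EvAct.mem (MemAct.write x v)

def Ev.isReadEv (e : Ev Proc Var Val Op Ret) : Prop :=
  ∃ x v, e.act = EvAct.mem (MemAct.read x v)

def Ev.isResEv (e : Ev Proc Var Val Op Ret) : Prop := ∃ u, e.act = EvAct.res u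

def Ev.isFenceEv (e : Ev Proc Var Val Op Ret) : Prop := e.act = EvAct.mem MemAct.fence

/-- The two-event history `⟨p : o ⇒ u⟩`. -/
def invres (p : Proc) (o : Op) (u : Ret) : List (ObjEv Proc Op Ret) :=
  [⟨p, ObjAct.inv o⟩, ⟨p, ObjAct.res u⟩]

/-- Complete sequential histories: concatenations of matching invocation–response pairs. -/
inductive CompleteSeq : List (ObjEv Proc Op Ret) → Prop where
  | nil : CompleteSeq []
  | cons (p : Proc) (o : Op) (u : Ret) {h : List (ObjEv Proc Op Ret)} :
      CompleteSeq h → CompleteSeq (⟨p, ObjAct.inv o⟩ :: ⟨p, ObjAct.res u⟩ :: h)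

/-- Sequential histories: prefixes of complete sequential histories. -/
def Sequential (h : List (ObjEv Proc Op Ret)) : Prop :=
  ∃ h' : List (ObjEv Proc Op Ret), CompleteSeq h' ∧ h <+: h'

def WellFormed [DecidableEq Proc] (h : List (ObjEv Proc Op Ret)) : Prop :=
  ∀ p : Proc, Sequential (h.filter (fun e => decide (e.proc = p)))

/-- Complete histories: well-formed, and each process's restriction is empty or
ends with a response event. -/
def CompleteH [DecidableEq Proc] (h : List (ObjEv Proc Op Ret)) : Prop :=
  WellFormed h ∧
    ∀ p : Proc, h.filter (fun e => decide (e.proc = p)) = [] ∨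
      ∃ e : ObjEv Proc Op Ret,
        (h.filter (fun e => decide (e.proc = p))).getLast? = some e ∧ e.act.isRes

end Events

/-! ### Reorderings and linearization -/

/-- `Reorder R s s'` : `s'` is an `R`-reordering of `s`. -/
def Reorder {α : Type u} (R : α → α → Prop) (s s' : List α) : Prop :=
  ∃ f : Fin s.length ≃ Fin s'.length,
    (∀ i : Fin s.length, s'.get (f i) = s.get i) ∧
    ∀ i j : Fin s.length, i < j → R (s.get i) (s.get j) → f i < f j

section Lin

variable {Proc Var Val Op Ret : Type}

/-- The `sproc` relation on general events: same process. -/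
def sprocEv (e1 e2 : Ev Proc Var Val Op Ret) : Prop := e1.proc = e2.proc

/-- The `lin` relation on object events. -/
def linRel (e1 e2 : ObjEv Proc Op Ret) : Prop :=
  e1.proc = e2.proc ∨ (e1.act.isRes ∧ e2.act.isInv)

/-- `h ⊑ H'`: some history in `H'` linearizes `h`. -/
def LinInto (Spec : Set (List (ObjEv Proc Op Ret))) (h : List (ObjEv Proc Op Ret)) : Prop :=
  ∃ h' ∈ Spec, Reorder linRel h h'

/-- A specification: a prefix-closed set of complete sequential histories. -/
def IsSpec (Spec : Set (List (ObjEv Proc Op Ret))) : Prop :=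
  (∀ h ∈ Spec, CompleteSeq h) ∧
  (∀ h ∈ Spec, ∀ h' : List (ObjEv Proc Op Ret), h' <+: h → CompleteSeq h' → h' ∈ Spec)

/-- A deterministic object: no two specification histories have a longest common prefix
ending with an invocation. -/
def Deterministic (Spec : Set (List (ObjEv Proc Op Ret))) : Prop :=
  ∀ h1 ∈ Spec, ∀ h2 ∈ Spec, ∀ (g : List (ObjEv Proc Op Ret)) (p : Proc) (o : Op),
    (g ++ [⟨p, ObjAct.inv o⟩]) <+: h1 → (g ++ [⟨p, ObjAct.inv o⟩]) <+: h2 →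
    ∃ e : ObjEv Proc Op Ret,
      (g ++ [⟨p, ObjAct.inv o⟩, e]) <+: h1 ∧ (g ++ [⟨p, ObjAct.inv o⟩, e]) <+: h2

def WeaklySpecMergeableAfter (Spec : Set (List (ObjEv Proc Op Ret)))
    (h0 h1 h2 : List (ObjEv Proc Op Ret)) : Prop :=
  LinInto Spec (h0 ++ h1) → LinInto Spec (h0 ++ h2) →
    ∃ h, Shuffle h1 h2 h ∧ LinInto Spec (h0 ++ h)

def StronglySpecMergeableAfter (Spec : Set (List (ObjEv Proc Op Ret)))
    (h0 h1 h2 : List (ObjEv Proc Op Ret)) : Prop :=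
  LinInto Spec (h0 ++ h1) → LinInto Spec (h0 ++ h2) →
    ∀ h, Shuffle h1 h2 h → LinInto Spec (h0 ++ h)

def SpecMergeableAfter (strong : Bool) (Spec : Set (List (ObjEv Proc Op Ret)))
    (h0 h1 h2 : List (ObjEv Proc Op Ret)) : Prop :=
  if strong then StronglySpecMergeableAfter Spec h0 h1 h2
  else WeaklySpecMergeableAfter Spec h0 h1 h2

/-- One-sided non-commutativity. -/
def OneSidedNonComm (Spec : Set (List (ObjEv Proc Op Ret))) (o1 o2 : Op) : Prop :=
  ∃ (h0 : List (ObjEv Proc Op Ret)) (p1 p2 : Proc) (u1 v1 u2 : Ret),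
    CompleteSeq h0 ∧ p1 ≠ p2 ∧ u1 ≠ v1 ∧
    h0 ++ invres p1 o1 u1 ∈ Spec ∧
    h0 ++ invres p2 o2 u2 ++ invres p1 o1 v1 ∈ Spec

/-- Two-sided non-commutativity. -/
def TwoSidedNonComm (Spec : Set (List (ObjEv Proc Op Ret))) (o1 o2 : Op) : Prop :=
  ∃ (h0 : List (ObjEv Proc Op Ret)) (p1 p2 : Proc) (u1 v1 u2 v2 : Ret),
    CompleteSeq h0 ∧ p1 ≠ p2 ∧ u1 ≠ v1 ∧ u2 ≠ v2 ∧
    h0 ++ invres p1 o1 u1 ++ invres p2 o2 v2 ∈ Spec ∧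
    h0 ++ invres p2 o2 u2 ++ invres p1 o1 v1 ∈ Spec

end Lin

/-! ### Implementations -/

/-- An implementation of an operation for a process `p`: an LTS labeled by events of `p`
in which a response event is always the last transition. -/
structure OpImpl (Proc Var Val Op Ret : Type) (p : Proc) : Type 1 where
  State : Type
  init : State
  step : State → Ev Proc Var Val Op Ret → State → Prop
  proc_eq : ∀ q e q', step q e q' → Ev.proc e = p
  res_final : ∀ (q : State) (u : Ret) (q' : State),
    step q ⟨p, EvAct.res u⟩ q' → ∀ e q'', ¬ step q' e q''

section Impl

variable {Proc Var Val Op Ret : Type}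

def OpImpl.traces {p : Proc} (Iop : OpImpl Proc Var Val Op Ret p) :
    Set (List (Ev Proc Var Val Op Ret)) :=
  {π | ∃ q : Iop.State, LTSPath Iop.step Iop.init π q}

/-- An implementation of an object. -/
def Impl (Proc Var Val Op Ret : Type) : Type 1 :=
  (o : Op) → (p : Proc) → OpImpl Proc Var Val Op Ret p

/-- Per-process states of the system induced by an implementation: `none` is idle. -/
def SIPState (I : Impl Proc Var Val Op Ret) (p : Proc) : Type :=
  Option ((o : Op) × (I o p).State)

/-- Per-process transitions of the system induced by an implementation. -/
inductive SIPStep (I : Impl Proc Var Val Op Ret) (p : Proc) :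
    SIPState I p → Ev Proc Var Val Op Ret → SIPState I p → Prop where
  | invoke (o : Op) :
      SIPStep I p none ⟨p, EvAct.inv o⟩ (some ⟨o, (I o p).init⟩)
  | memStep {o : Op} {q q' : (I o p).State} (a : MemAct Var Val) :
      (I o p).step q ⟨p, EvAct.mem a⟩ q' →
      SIPStep I p (some ⟨o, q⟩) ⟨p, EvAct.mem a⟩ (some ⟨o, q'⟩)
  | resStep {o : Op} {q q' : (I o p).State} (u : Ret) :
      (I o p).step q ⟨p, EvAct.res u⟩ q' →
      SIPStep I p (some ⟨o, q⟩) ⟨p, EvAct.res u⟩ none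

def SIState (I : Impl Proc Var Val Op Ret) : Type :=
  (p : Proc) → SIPState I p

/-- The system induced by an implementation interleaves the processes. -/
inductive SIStep [DecidableEq Proc] (I : Impl Proc Var Val Op Ret) :
    SIState I → Ev Proc Var Val Op Ret → SIState I → Prop where
  | mk (s : SIState I) (p : Proc) (e : Ev Proc Var Val Op Ret) (t : SIPState I p) :
      SIPStep I p (s p) e t → SIStep I s e (Function.update s p t)

def ImplTraces [DecidableEq Proc] (I : Impl Proc Var Val Op Ret) :
    Set (List (Ev Proc Var Val Op Ret)) :=
  {π | ∃ s : SIState I, LTSPath (SIStep I) (fun _ => none) π s}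

/-- Histories generated by `I` after `π0` under memory model `M`. -/
def GenHist [DecidableEq Proc] (π0 : List (Ev Proc Var Val Op Ret))
    (I : Impl Proc Var Val Op Ret) (M : MemModel Proc Var Val) :
    Set (List (ObjEv Proc Op Ret)) :=
  {h | ∃ π : List (Ev Proc Var Val Op Ret),
      π0 ++ π ∈ ImplTraces I ∧ restrictObj π = h ∧
      restrictMem (π0 ++ π) ∈ M.OTraces M.init}

/-- Consistency: every complete generated history linearizes into the specification. -/
def Consistent [DecidableEq Proc] (I : Impl Proc Var Val Op Ret)
    (M : MemModel Proc Var Val) (Spec : Set (List (ObjEv Proc Op Ret))) : Prop :=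
  ∀ h ∈ GenHist [] I M, CompleteH h → LinInto Spec h

/-- Availability after `h0` w.r.t. `h`. -/
def AvailableAfter [DecidableEq Proc] [DecidableEq Var] [Zero Val]
    (I : Impl Proc Var Val Op Ret) (h0 h : List (ObjEv Proc Op Ret)) : Prop :=
  ∀ π0 ∈ ImplTraces I,
    restrictMem π0 ∈ (SCMModel Proc Var Val).OTraces (SCMModel Proc Var Val).init →
    restrictObj π0 = h0 →
    h ∈ GenHist π0 I (SCMModel Proc Var Val)

def SpecAvailable [DecidableEq Proc] [DecidableEq Var] [Zero Val]
    (I : Impl Proc Var Val Op Ret) (Spec : Set (List (ObjEv Proc Op Ret))) : Prop :=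
  ∀ h0 h : List (ObjEv Proc Op Ret), CompleteSeq h0 → CompleteSeq h →
    h0 ++ h ∈ Spec → AvailableAfter I h0 h

end Impl

/-! ### Fence insertion -/

section Fence

variable {Proc Var Val Op Ret : Type}

/-- `FenceInsertion π π'` : `π'` is obtained from `π` by inserting fence events. -/
inductive FenceInsertion : List (Ev Proc Var Val Op Ret) → List (Ev Proc Var Val Op Ret) → Prop where
  | nil : FenceInsertion [] []
  | keep (e : Ev Proc Var Val Op Ret) {π π' : List (Ev Proc Var Val Op Ret)} :
      FenceInsertion π π' → FenceInsertion (e :: π) (e :: π')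
  | fence (p : Proc) {π π' : List (Ev Proc Var Val Op Ret)} :
      FenceInsertion π π' → FenceInsertion π (⟨p, EvAct.mem MemAct.fence⟩ :: π')

/-- Every write is separated from every later read or response by a fence. -/
def FencedWrites (π : List (Ev Proc Var Val Op Ret)) : Prop :=
  ∀ (i j : ℕ) (ei ej : Ev Proc Var Val Op Ret),
    i < j → π[i]? = some ei → π[j]? = some ej →
    Ev.isWriteEv ei → (Ev.isReadEv ej ∨ Ev.isResEv ej) →
    ∃ (k : ℕ) (ek : Ev Proc Var Val Op Ret),
      i < k ∧ k < j ∧ π[k]? = some ek ∧ Ev.isFenceEv ek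

/-- Histories generated by `I` under `M` (from the initial state). -/
def GeneratedHistories [DecidableEq Proc] (I : Impl Proc Var Val Op Ret)
    (M : MemModel Proc Var Val) : Set (List (ObjEv Proc Op Ret)) :=
  {h | ∃ π ∈ ImplTraces I, restrictObj π = h ∧ restrictMem π ∈ M.OTraces M.init}

end Fence

/-! ### The snapshot object -/

inductive SnapOp (W : Type) : Type where
  | update (w : W)
  | scan

inductive SnapRet (Proc W : Type) : Type where
  | ack
  | vec (v : Proc → Option W)

section Snapshot

variable {Proc W : Type}

/-- The sequential specification of the single-writer snapshot object, threaded
through the current contents `s`. -/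
inductive SnapSpecFrom [DecidableEq Proc] :
    (Proc → Option W) → List (ObjEv Proc (SnapOp W) (SnapRet Proc W)) → Prop where
  | nil (s : Proc → Option W) : SnapSpecFrom s []
  | update (s : Proc → Option W) (p : Proc) (w : W)
      {h : List (ObjEv Proc (SnapOp W) (SnapRet Proc W))} :
      SnapSpecFrom (Function.update s p (some w)) h →
      SnapSpecFrom s (⟨p, ObjAct.inv (SnapOp.update w)⟩ :: ⟨p, ObjAct.res SnapRet.ack⟩ :: h)
  | scan (s : Proc → Option W) (p : Proc)
      {h : List (ObjEv Proc (SnapOp W) (SnapRet Proc W))} :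
      SnapSpecFrom s h →
      SnapSpecFrom s (⟨p, ObjAct.inv SnapOp.scan⟩ :: ⟨p, ObjAct.res (SnapRet.vec s)⟩ :: h)

def SnapSpec (Proc W : Type) [DecidableEq Proc] :
    Set (List (ObjEv Proc (SnapOp W) (SnapRet Proc W))) :=
  {h | SnapSpecFrom (fun _ => none) h}

end Snapshot

/-!
SCM and TSO simulate SCM along a map into their stable states: SCM maps to itself, and a memory
`m` maps to the TSO state with main memory `m` and empty buffers, a write being buffered and
immediately propagated. For RA the simulating states are the synchronised ones, in which every
process has the same view `T`, `T` dominates every timestamp and the fence view, and the message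
at timestamp `T x` carries `m x`; such a state has no enabled propagation. A write or RMW adds
a message at timestamp `T x + 1` whose view is the writer's new view, and propagating that
message to the other processes, one at a time, synchronises the state again.
-/

section WellBehaved

variable {Proc Var Val : Type} [DecidableEq Var] [Zero Val]

theorem wellBehaved_of_map_stable (M : MemModel Proc Var Val) (f : (Var → Val) → M.State)
    (stable : ∀ m, M.Stable (f m)) (init : f (fun _ => 0) = M.init)
    (simulate : ∀ m l m', SCMStep Proc Var Val m l m' →
      ∃ q1, M.step (f m) l q1 ∧ TauReach M q1 (f m')) :
    WellBehaved M := by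
  refine ⟨fun m q => q = f m, fun m _ hq => hq ▸ stable m, init.symm, ?_⟩
  rintro m _ rfl l m' hstep
  obtain ⟨q1, hstep1, htau⟩ := simulate m l m' hstep
  exact ⟨q1, f m', hstep1, htau, stable m', rfl⟩

theorem scm_wellBehaved : WellBehaved (SCMModel Proc Var Val) :=
  wellBehaved_of_map_stable _ id (fun _ _ h => nomatch h) rfl
    fun _ _ m' h => ⟨m', h, .refl⟩

theorem tso_wellBehaved [DecidableEq Proc] : WellBehaved (TSOModel Proc Var Val) := by
  refine wellBehaved_of_map_stable (TSOModel Proc Var Val) (fun m => (m, fun _ => []))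
    (fun m _ h => ?_) rfl fun m l m' hstep => ?_
  · cases h with
    | propagate _ _ _ _ _ _ hb => exact List.cons_ne_nil _ _ hb.symm
  cases hstep with
  | write p x v =>
    refine ⟨_, TSOStep.write m _ p x v, .single ?_⟩
    simpa [TSOModel] using
      TSOStep.propagate (Val := Val) m (Function.update (fun _ => []) p [(x, v)]) p x v [] (by simp)
  | read p x => exact ⟨_, TSOStep.readMemory m _ p x List.filter_nil, .refl⟩
  | rmw p x vnew => exact ⟨_, TSOStep.rmw m _ p x vnew rfl, .refl⟩
  | fence p => exact ⟨_, TSOStep.fence m _ p rfl, .refl⟩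

end WellBehaved

theorem viewJoin_eq_left {Var : Type} {V₁ V₂ : Var → ℕ} (h : V₂ ≤ V₁) : viewJoin V₁ V₂ = V₁ :=
  funext fun y => max_eq_left (h y)

theorem viewJoin_eq_right {Var : Type} {V₁ V₂ : Var → ℕ} (h : V₁ ≤ V₂) : viewJoin V₁ V₂ = V₂ :=
  funext fun y => max_eq_right (h y)

namespace RAState

variable {Proc Var Val : Type}

structure SyncedAt (s : RAState Proc Var Val) (m : Var → Val) (T : Var → ℕ) : Prop where
  view_eq : s.view = fun _ => T
  mem_current : ∀ x, ∃ V, (⟨x, m x, T x, V⟩ : RAMsg Var Val) ∈ s.mem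
  time_le : ∀ μ ∈ s.mem, μ.time ≤ T μ.var
  fview_le : s.fview ≤ T

variable [DecidableEq Proc] [DecidableEq Var] [Zero Val]

theorem SyncedAt.stable {s : RAState Proc Var Val} {m : Var → Val} {T : Var → ℕ}
    (h : s.SyncedAt m T) : (RAModel Proc Var Val).Stable s := by
  intro _ hstep
  cases hstep with
  | propagate _ μ hμ hlt =>
    rw [h.view_eq] at hlt
    exact (h.time_le μ hμ).not_gt hlt

theorem tauReach_propagate_to_all (mem : Set (RAMsg Var Val)) (fv : Var → ℕ) {μ : RAMsg Var Val}
    (hμ : μ ∈ mem) {T : Var → ℕ} (hlt : T μ.var < μ.time) (U : Finset Proc) :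
    TauReach (RAModel Proc Var Val)
      ⟨mem, fun q => if q ∈ U then T else viewJoin T μ.view, fv⟩
      ⟨mem, fun _ => viewJoin T μ.view, fv⟩ := by
  induction U using Finset.induction_on with
  | empty =>
    simp only [Finset.notMem_empty, if_false]
    exact .refl
  | insert a U ha ih =>
    refine .head ?_ ih
    show RAStep Proc Var Val _ none _
    convert RAStep.propagate ⟨mem, fun q => if q ∈ insert a U then T else viewJoin T μ.view, fv⟩
      a μ hμ (by simpa using hlt) using 2
    funext q
    by_cases hq : q = a <;> simp [hq, ha]

def afterWrite (s : RAState Proc Var Val) (T : Var → ℕ) (p : Proc) (x : Var) (w : Val) :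
    RAState Proc Var Val :=
  ⟨insert ⟨x, w, T x + 1, Function.update T x (T x + 1)⟩ s.mem,
    Function.update s.view p (Function.update T x (T x + 1)), s.fview⟩

theorem SyncedAt.afterWrite_tauReach [Fintype Proc] {s : RAState Proc Var Val} {m : Var → Val}
    {T : Var → ℕ} (h : s.SyncedAt m T) (p : Proc) (x : Var) (w : Val) :
    ∃ s', TauReach (RAModel Proc Var Val) (s.afterWrite T p x w) s' ∧
      s'.SyncedAt (Function.update m x w) (Function.update T x (T x + 1)) := by
  set T' := Function.update T x (T x + 1)
  have hTT' : T ≤ T' := by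
    intro y
    by_cases hy : y = x <;> simp [T', hy]
  refine ⟨⟨s.afterWrite T p x w |>.mem, fun _ => T', s.fview⟩, ?_, ?_⟩
  · have hviews : (s.afterWrite T p x w).view =
        fun q => if q ∈ Finset.univ.erase p then T else viewJoin T T' := by
      funext q
      by_cases hq : q = p <;> simp [afterWrite, hq, h.view_eq, viewJoin_eq_right hTT', T']
    have := tauReach_propagate_to_all (Proc := Proc) (s.afterWrite T p x w).mem s.fview
      (μ := ⟨x, w, T x + 1, T'⟩) (Set.mem_insert _ _) (T := T) (by simp)
      (Finset.univ.erase p)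
    rwa [← hviews, viewJoin_eq_right hTT'] at this
  · refine ⟨rfl, fun y => ?_, ?_, h.fview_le.trans hTT'⟩
    · by_cases hy : y = x
      · subst hy
        exact ⟨T', by simp [afterWrite, T']⟩
      · obtain ⟨V, hV⟩ := h.mem_current y
        exact ⟨V, Set.mem_insert_of_mem _ (by simpa [hy, T'] using hV)⟩
    · rintro μ (rfl | hμ)
      · simp [T']
      · exact (h.time_le μ hμ).trans (hTT' _)

end RAState

open RAState in
theorem ra_wellBehaved {Proc Var Val : Type} [Fintype Proc] [DecidableEq Proc] [DecidableEq Var]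
    [Zero Val] : WellBehaved (RAModel Proc Var Val) := by
  refine ⟨fun m s => ∃ T, s.SyncedAt m T, fun _ _ ⟨_, h⟩ => h.stable,
    ⟨fun _ => 0, rfl, fun x => ⟨_, x, rfl⟩, by rintro _ ⟨x, rfl⟩; rfl, le_rfl⟩, ?_⟩
  rintro m s ⟨T, h⟩ l m' hstep
  have hview : ∀ p, s.view p = T := fun p => congrFun h.view_eq p
  have hfresh : ∀ x, ∀ μ ∈ s.mem, μ.var = x → μ.time ≠ T x + 1 := by
    rintro x μ hμ rfl
    have := h.time_le μ hμ
    omega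
  cases hstep with
  | write p x v =>
    obtain ⟨s', htau, h'⟩ := h.afterWrite_tauReach p x v
    have hstep := RAStep.write s p x v (T x + 1) (by rw [hview]; omega) (hfresh x)
    exact ⟨_, s', by simpa [RAModel, hview] using hstep, by simpa [afterWrite, hview] using htau,
      h'.stable, _, h'⟩
  | read p x =>
    obtain ⟨V, hV⟩ := h.mem_current x
    exact ⟨s, s, RAStep.read s p x (m x) V (by rwa [hview]), .refl, h.stable, T, h⟩
  | rmw p x vnew =>
    obtain ⟨V, hV⟩ := h.mem_current x
    obtain ⟨s', htau, h'⟩ := h.afterWrite_tauReach p x vnew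
    have hstep := RAStep.rmw s p x (m x) vnew V (by rwa [hview]) (by simpa [hview] using hfresh x)
    exact ⟨_, s', by simpa [RAModel, hview] using hstep, by simpa [afterWrite, hview] using htau,
      h'.stable, _, h'⟩
  | fence p =>
    have hsync : (⟨s.mem, s.view, T⟩ : RAState Proc Var Val).SyncedAt m T :=
      ⟨h.view_eq, h.mem_current, h.time_le, le_rfl⟩
    have hstep := RAStep.fence s p
    have hupdate : Function.update s.view p T = s.view := by
      rw [← hview p, Function.update_eq_self]
    rw [hview, viewJoin_eq_left h.fview_le, hupdate] at hstep
    exact ⟨_, _, hstep, .refl, hsync.stable, T, hsync⟩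

/-- Each of the memory models SCM, TSO, and RA is well-behaved. -/
theorem scm_tso_ra_wellBehaved (Proc Var Val : Type) [Fintype Proc] [DecidableEq Proc]
    [DecidableEq Var] [Zero Val] :
    WellBehaved (SCMModel Proc Var Val) ∧ WellBehaved (TSOModel Proc Var Val) ∧
      WellBehaved (RAModel Proc Var Val) :=
  ⟨scm_wellBehaved, tso_wellBehaved, ra_wellBehaved⟩

end WMM
end

section
/- Every RW-RBW observable memory sequence σ1 and every observable memory sequence σ2 with procs(σ1) ∩ procs(σ2) = ∅ are weakly mergeable in SCM. -/
set_option autoImplicit false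

namespace WMM

universe u v

/-!
Split `σ1` into its leading reads `ρ` and the rest `δ`, which starts with a write. The reads of `ρ`
leave the memory unchanged, so `ρ` followed by `σ2` runs in SCM. By `IsRBW`, every read of `δ`
returns a value written earlier in `δ`, so `δ` can be replayed from whatever memory `σ2` leaves:
`ρ ++ σ2 ++ δ` is the required interleaving.
-/

namespace LTSPath

variable {S : Type u} {L : Type v} {step : S → L → S → Prop}

theorem append {a b c : S} {π₁ π₂ : List L} (h₁ : LTSPath step a π₁ b)
    (h₂ : LTSPath step b π₂ c) : LTSPath step a (π₁ ++ π₂) c := by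
  induction h₁ with
  | nil => exact h₂
  | cons hs _ ih => exact cons hs (ih h₂)

theorem exists_of_append {a c : S} {π₁ π₂ : List L} (h : LTSPath step a (π₁ ++ π₂) c) :
    ∃ b, LTSPath step a π₁ b ∧ LTSPath step b π₂ c := by
  induction π₁ generalizing a with
  | nil => exact ⟨a, nil a, h⟩
  | cons l t ih =>
    cases h with
    | cons hs hp =>
      obtain ⟨b, hb₁, hb₂⟩ := ih hp
      exact ⟨b, cons hs hb₁, hb₂⟩

end LTSPath

namespace Shuffle

variable {α : Type u}

theorem nil_right (s : List α) : Shuffle s [] s := by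
  induction s using List.reverseRecOn with
  | nil => exact nil
  | append_singleton t x ih => exact left x ih

theorem append_left {s₁ s₂ s : List α} (h : Shuffle s₁ s₂ s) (t : List α) :
    Shuffle (s₁ ++ t) s₂ (s ++ t) := by
  induction t using List.reverseRecOn with
  | nil => simpa
  | append_singleton t x ih => simpa only [← List.append_assoc] using left x ih

theorem append_right {s₁ s₂ s : List α} (h : Shuffle s₁ s₂ s) (t : List α) :
    Shuffle s₁ (s₂ ++ t) (s ++ t) := by
  induction t using List.reverseRecOn with
  | nil => simpa
  | append_singleton t x ih => simpa only [← List.append_assoc] using right x ih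

end Shuffle

section SCM

variable {Proc Var Val : Type}

def ReadsPrecededByWrite (δ : List (MemEv Proc Var Val)) (x : Var) : Prop :=
  ∀ (j : ℕ) (e : MemEv Proc Var Val) (v : Val), δ[j]? = some e → e.act = MemAct.read x v →
    ∃ i < j, ∃ (e' : MemEv Proc Var Val) (u : Val),
      δ[i]? = some e' ∧ e'.act = MemAct.write x u

theorem ReadsPrecededByWrite.of_cons {e₀ : MemEv Proc Var Val}
    {δ : List (MemEv Proc Var Val)} {x : Var} (h : ReadsPrecededByWrite (e₀ :: δ) x)
    (h₀ : ∀ u, e₀.act ≠ MemAct.write x u) :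
    ReadsPrecededByWrite δ x := by
  intro j e v hj he
  obtain ⟨i, hi, e', u, hie, hw⟩ := h (j + 1) e v (by simpa using hj) he
  cases i with
  | zero =>
    obtain rfl : e₀ = e' := by simpa using hie
    exact absurd hw (h₀ u)
  | succ i => exact ⟨i, by omega, e', u, by simpa using hie, hw⟩

theorem IsRW.of_append_right {ρ δ : List (MemEv Proc Var Val)} (h : IsRW (ρ ++ δ)) :
    IsRW δ :=
  fun e he => h e (List.mem_append_right ρ he)

theorem IsRBW.of_append_right {ρ δ : List (MemEv Proc Var Val)} (h : IsRBW (ρ ++ δ)) :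
    IsRBW δ := by
  intro k₁ k₂ e₁ e₂ x y v w hk h₁ h₂ hw hr hxy
  have shift : ∀ k, (ρ ++ δ)[ρ.length + k]? = δ[k]? := fun k => by
    rw [List.getElem?_append_right (by omega), Nat.add_sub_cancel_left]
  obtain ⟨k, e, u, hk₁, hk₂, hke, hwe⟩ := h (ρ.length + k₁) (ρ.length + k₂) e₁ e₂ x y v w
    (by omega) (by rwa [shift]) (by rwa [shift]) hw hr hxy
  refine ⟨k - ρ.length, e, u, by omega, by omega, ?_, hwe⟩
  rwa [← shift, Nat.add_sub_cancel' (by omega)]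

/-- Reads of the first write's variable are covered by that write, reads of any other variable
by `IsRBW`. -/
theorem IsRBW.readsPrecededByWrite {δ : List (MemEv Proc Var Val)} (h : IsRBW δ)
    (hhead : ∀ e ∈ δ.head?, e.isWrite) (x : Var) : ReadsPrecededByWrite δ x := by
  intro j e v hj hr
  obtain _ | ⟨e₀, δ'⟩ := δ
  · simp at hj
  obtain ⟨x₀, v₀, hw₀⟩ := hhead e₀ rfl
  have hj₀ : j ≠ 0 := by
    rintro rfl
    obtain rfl : e₀ = e := by simpa using hj
    rw [hw₀] at hr
    cases hr
  by_cases hx : x₀ = x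
  · exact ⟨0, by omega, e₀, v₀, rfl, hx ▸ hw₀⟩
  · obtain ⟨k, e', u, -, hk, hke, hwe⟩ :=
      h 0 j e₀ e x₀ x v₀ v (Nat.pos_of_ne_zero hj₀) rfl hj hw₀ hr hx
    exact ⟨k, hk, e', u, hke, hwe⟩

theorem IsRW.exists_reads_append : ∀ {σ : List (MemEv Proc Var Val)}, IsRW σ →
    ∃ ρ δ, σ = ρ ++ δ ∧ (∀ e ∈ ρ, e.isRead) ∧ ∀ e ∈ δ.head?, e.isWrite
  | [], _ => ⟨[], [], rfl, by simp, by simp⟩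
  | e :: σ, h => by
    rcases h e List.mem_cons_self with hw | hr
    · exact ⟨[], e :: σ, rfl, by simp, by simpa using hw⟩
    · obtain ⟨ρ, δ, rfl, hρ, hδ⟩ :=
        exists_reads_append fun e' he' => h e' (List.mem_cons_of_mem e he')
      exact ⟨e :: ρ, δ, rfl, by simpa [hr] using hρ, hδ⟩

variable [DecidableEq Var]

abbrev SCMEvStep (m : Var → Val) (e : MemEv Proc Var Val) (m' : Var → Val) : Prop :=
  SCMStep Proc Var Val m (some e) m'

theorem mem_oTraces_scmModel_iff [Zero Val] {q : Var → Val} {σ : List (MemEv Proc Var Val)} :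
    σ ∈ (SCMModel Proc Var Val).OTraces q ↔ ∃ q', LTSPath SCMEvStep q σ q' := by
  constructor
  · rintro ⟨π, q', hπ, rfl⟩
    refine ⟨q', ?_⟩
    induction hπ with
    | nil s => exact LTSPath.nil s
    | cons hs _ ih => cases hs <;> exact LTSPath.cons (by constructor) ih
  · rintro ⟨q', hσ⟩
    refine ⟨σ.map some, q', ?_, by simp [List.reduceOption, List.filterMap_map]⟩
    induction hσ with
    | nil s => exact LTSPath.nil s
    | cons hs _ ih => exact LTSPath.cons hs ih

theorem LTSPath.eq_of_forall_isRead {m m' : Var → Val} {ρ : List (MemEv Proc Var Val)}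
    (h : LTSPath SCMEvStep m ρ m') (hρ : ∀ e ∈ ρ, e.isRead) : m' = m := by
  induction h with
  | nil => rfl
  | cons hs _ ih =>
    obtain ⟨x, v, he⟩ := hρ _ List.mem_cons_self
    cases hs with
    | read => exact ih fun e' he' => hρ e' (List.mem_cons_of_mem _ he')
    | _ => cases he

theorem LTSPath.exists_of_readsPrecededByWrite {m m₁ : Var → Val}
    {δ : List (MemEv Proc Var Val)} (h : LTSPath SCMEvStep m δ m₁) (hδ : IsRW δ) (m' : Var → Val)
    (hm' : ∀ x, m' x ≠ m x → ReadsPrecededByWrite δ x) :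
    ∃ m₁', LTSPath SCMEvStep m' δ m₁' := by
  induction h generalizing m' with
  | nil => exact ⟨m', nil m'⟩
  | @cons s _ _ e ls hs _ ih =>
    have hls : IsRW ls := fun e' he' => hδ e' (List.mem_cons_of_mem e he')
    cases hs with
    | write p z v =>
      obtain ⟨m₁', hrun⟩ := ih hls (Function.update m' z v) fun y hy => by
        have hyz : y ≠ z := by rintro rfl; simp at hy
        refine (hm' y (by simpa [Function.update_of_ne hyz] using hy)).of_cons ?_
        rintro u ⟨⟩
        exact hyz rfl
      exact ⟨m₁', cons (SCMStep.write m' p z v) hrun⟩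
    | read p z =>
      have hz : m' z = s z := by
        by_contra hne
        obtain ⟨i, hi, -⟩ := hm' z hne 0 _ _ rfl rfl
        omega
      obtain ⟨m₁', hrun⟩ := ih hls m' fun y hy => (hm' y hy).of_cons fun u => by simp
      exact ⟨m₁', cons (hz ▸ SCMStep.read m' p z) hrun⟩
    | rmw | fence => rcases hδ _ List.mem_cons_self with ⟨_, _, ⟨⟩⟩ | ⟨_, _, ⟨⟩⟩

end SCM

theorem scm_weak_merge_general (Proc Var Val : Type) [DecidableEq Var] [Zero Val]
    (σ1 σ2 : List (MemEv Proc Var Val))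
    (hRW : IsRW σ1) (hRBW : IsRBW σ1) :
    WeaklyMergeable (SCMModel Proc Var Val) σ1 σ2 := by
  intro q₀ _ h₁ h₂
  obtain ⟨q₁, hrun₁⟩ := mem_oTraces_scmModel_iff.1 h₁
  obtain ⟨q₂, hrun₂⟩ := mem_oTraces_scmModel_iff.1 h₂
  obtain ⟨ρ, δ, rfl, hρ, hδ⟩ := hRW.exists_reads_append
  obtain ⟨q, hrunρ, hrunδ⟩ := hrun₁.exists_of_append
  obtain rfl : q = q₀ := hrunρ.eq_of_forall_isRead hρ
  obtain ⟨q₃, hrunδ'⟩ := hrunδ.exists_of_readsPrecededByWrite hRW.of_append_right q₂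
    fun x _ => hRBW.of_append_right.readsPrecededByWrite hδ x
  refine ⟨ρ ++ σ2 ++ δ, ((Shuffle.nil_right ρ).append_right σ2).append_left δ, ?_⟩
  rw [List.append_assoc]
  exact mem_oTraces_scmModel_iff.2 ⟨q₃, hrunρ.append (hrun₂.append hrunδ')⟩

/-- every RW-RBW observable memory sequence `σ1` and every observable
memory sequence `σ2` with disjoint processes are weakly mergeable in SCM. -/
theorem scm_weak_merge (Proc Var Val : Type) [Fintype Proc] [DecidableEq Var] [Zero Val]
    (σ1 σ2 : List (MemEv Proc Var Val))
    (hRW : IsRW σ1) (hRBW : IsRBW σ1)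
    (hdisj : memProcs σ1 ∩ memProcs σ2 = ∅) :
    WeaklyMergeable (SCMModel Proc Var Val) σ1 σ2 :=
  scm_weak_merge_general Proc Var Val σ1 σ2 hRW hRBW

end WMM
end

section
/- Every two solo-RW observable memory sequences σ1 and σ2 with procs(σ1) ∩ procs(σ2) = ∅ are strongly mergeable in TSO. -/
set_option autoImplicit false

namespace WMM

universe u v

/-! ### Auxiliary development for TSO strong mergeability -/

section TSOAux

variable {Proc Var Val : Type} [DecidableEq Proc] [DecidableEq Var]

def wAll (m : Var → Val) (l : List (Var × Val)) : Var → Val :=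
  l.foldl (fun m pr => Function.update m pr.1 pr.2) m

def bfilter (l : List (Var × Val)) (x : Var) : List (Var × Val) :=
  l.filter (fun pr => decide (pr.1 = x))

lemma wAll_append (m : Var → Val) (l l' : List (Var × Val)) :
    wAll m (l ++ l') = wAll (wAll m l) l' := by
  simp [wAll, List.foldl_append]

lemma bfilter_append (l l' : List (Var × Val)) (x : Var) :
    bfilter (l ++ l') x = bfilter l x ++ bfilter l' x := by
  simp [bfilter, List.filter_append]

lemma getLast?_cons_of_some {α : Type} (a z : α) (l : List α)
    (h : l.getLast? = some z) : (a :: l).getLast? = some z := by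
  have := List.getLast?_append (l := [a]) (l' := l)
  simpa [h] using this

lemma wAll_view (fl : List (Var × Val)) (m : Var → Val) (x : Var) :
    (bfilter fl x).getLast? = some (x, wAll m fl x) ∨
    (bfilter fl x = [] ∧ wAll m fl x = m x) := by
  induction fl generalizing m with
  | nil => right; simp [bfilter, wAll]
  | cons pr rest ih =>
    obtain ⟨y, w⟩ := pr
    have hw : wAll m ((y, w) :: rest) = wAll (Function.update m y w) rest := rfl
    rcases ih (Function.update m y w) with h | ⟨h1, h2⟩
    · left
      rw [hw]
      by_cases hyx : y = x
      · have hb : bfilter ((y, w) :: rest) x = (y, w) :: bfilter rest x := by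
          simp [bfilter, List.filter_cons, hyx]
        rw [hb]
        exact getLast?_cons_of_some _ _ _ h
      · have hb : bfilter ((y, w) :: rest) x = bfilter rest x := by
          simp [bfilter, List.filter_cons, hyx]
        rw [hb]; exact h
    · by_cases hyx : y = x
      · left
        have hb : bfilter ((y, w) :: rest) x = [(y, w)] := by
          simp [bfilter, List.filter_cons, hyx]
          simpa [bfilter] using h1
        rw [hb, hw, h2, hyx, Function.update_self]
        rfl
      · right
        constructor
        · simpa [bfilter, List.filter_cons, hyx] using h1
        · rw [hw, h2, Function.update_of_ne (Ne.symm hyx)]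

/-- A lazy (buffer-only, never flushing) run of a solo RW sequence of process `p`
against fixed memory `m`, starting with pending buffer `buf`. -/
inductive CRuns (m : Var → Val) (p : Proc) :
    List (Var × Val) → List (MemEv Proc Var Val) → Prop where
  | nil (buf : List (Var × Val)) : CRuns m p buf []
  | write {buf : List (Var × Val)} {σ : List (MemEv Proc Var Val)} (x : Var) (v : Val) :
      CRuns m p (buf ++ [(x, v)]) σ → CRuns m p buf (⟨p, MemAct.write x v⟩ :: σ)
  | readB {buf : List (Var × Val)} {σ : List (MemEv Proc Var Val)} (x : Var) (v : Val) :
      (bfilter buf x).getLast? = some (x, v) →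
      CRuns m p buf σ → CRuns m p buf (⟨p, MemAct.read x v⟩ :: σ)
  | readM {buf : List (Var × Val)} {σ : List (MemEv Proc Var Val)} (x : Var) :
      bfilter buf x = [] →
      CRuns m p buf σ → CRuns m p buf (⟨p, MemAct.read x (m x)⟩ :: σ)

/-- The writes of a memory event sequence. -/
def wlst (σ : List (MemEv Proc Var Val)) : List (Var × Val) :=
  σ.filterMap (fun e => match e.act with
    | MemAct.write x v => some (x, v)
    | _ => none)

@[simp] lemma wlst_nil : wlst ([] : List (MemEv Proc Var Val)) = [] := rfl

lemma wlst_append (σ σ' : List (MemEv Proc Var Val)) :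
    wlst (σ ++ σ') = wlst σ ++ wlst σ' := by
  simp [wlst, List.filterMap_append]

lemma cruns_append (m : Var → Val) (p : Proc) :
    ∀ (σ σ' : List (MemEv Proc Var Val)) (buf : List (Var × Val)),
      CRuns m p buf (σ ++ σ') →
      CRuns m p buf σ ∧ CRuns m p (buf ++ wlst σ) σ' := by
  intro σ
  induction σ with
  | nil => intro σ' buf h; exact ⟨CRuns.nil buf, by simpa using h⟩
  | cons e rest ih =>
    intro σ' buf h
    cases h with
    | write x v h' =>
      obtain ⟨ha, hb⟩ := ih σ' _ h'
      refine ⟨CRuns.write x v ha, ?_⟩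
      have : wlst (⟨p, MemAct.write x v⟩ :: rest) = (x, v) :: wlst rest := by
        simp [wlst, List.filterMap_cons]
      rw [this]
      simpa [List.append_assoc] using hb
    | readB x v hl h' =>
      obtain ⟨ha, hb⟩ := ih σ' _ h'
      refine ⟨CRuns.readB x v hl ha, ?_⟩
      have : wlst (⟨p, MemAct.read x v⟩ :: rest) = wlst rest := by
        simp [wlst, List.filterMap_cons]
      rw [this]; exact hb
    | readM x hl h' =>
      obtain ⟨ha, hb⟩ := ih σ' _ h'
      refine ⟨CRuns.readM x hl ha, ?_⟩
      have : wlst (⟨p, MemAct.read x (m x)⟩ :: rest) = wlst rest := by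
        simp [wlst, List.filterMap_cons]
      rw [this]; exact hb

lemma ltspath_snoc {S : Type u} {L : Type v} {step : S → L → S → Prop}
    {s q' q'' : S} {π : List L} {l : L}
    (h : LTSPath step s π q') (h' : step q' l q'') :
    LTSPath step s (π ++ [l]) q'' := by
  induction h with
  | nil s => exact LTSPath.cons h' (LTSPath.nil _)
  | cons hst _ ih => exact LTSPath.cons hst (ih h')

lemma shuffle_nil_left {α : Type u} :
    ∀ {s1 s2 s : List α}, Shuffle s1 s2 s → s1 = [] → s = s2 := by
  intro s1 s2 s h
  induction h with
  | nil => intro _; rfl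
  | left x _ _ => intro hc; simp at hc
  | right x _ ih => intro hc; rw [ih hc]

lemma shuffle_nil_right {α : Type u} :
    ∀ {s1 s2 s : List α}, Shuffle s1 s2 s → s2 = [] → s = s1 := by
  intro s1 s2 s h
  induction h with
  | nil => intro _; rfl
  | left x _ ih => intro hc; rw [ih hc]
  | right x _ _ => intro hc; simp at hc

/-- Extraction: any TSO trace of a solo RW sequence from a related state is a lazy run. -/
lemma tso_extract (p : Proc) (m : Var → Val) :
    ∀ (π : List (Option (MemEv Proc Var Val))) (m' : Var → Val)
      (b' : Proc → List (Var × Val)) (q' : (Var → Val) × (Proc → List (Var × Val)))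
      (buf fl : List (Var × Val)),
      LTSPath (TSOStep Proc Var Val) (m', b') π q' →
      buf = fl ++ b' p → m' = wAll m fl → (∀ q, q ≠ p → b' q = []) →
      (∀ e ∈ π.reduceOption, MemEv.proc e = p ∧
        ((∃ x v, MemEv.act e = MemAct.write x v) ∨ ∃ x v, MemEv.act e = MemAct.read x v)) →
      CRuns m p buf π.reduceOption := by
  intro π
  induction π with
  | nil =>
    intro m' b' q' buf fl _ _ _ _ _
    exact CRuns.nil buf
  | cons l rest ih =>
    intro m' b' q' buf fl hpath hbuf hm hemp hev
    cases hpath with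
    | cons hstep hrest =>
      cases hstep with
      | write _ _ p' x v =>
        have hev' := hev ⟨p', MemAct.write x v⟩ (by simp)
        have hp : p' = p := hev'.1
        have hevt : ∀ e ∈ rest.reduceOption, MemEv.proc e = p ∧
            ((∃ x v, MemEv.act e = MemAct.write x v) ∨
              ∃ x v, MemEv.act e = MemAct.read x v) := by
          intro e he; exact hev e (by simp [he])
        rw [hp] at hrest
        rw [List.reduceOption_cons_of_some, hp]
        refine CRuns.write x v ?_
        refine ih _ _ _ (buf ++ [(x, v)]) fl hrest ?_ hm ?_ hevt
        · rw [hbuf, Function.update_self, List.append_assoc]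
        · intro q hq; rw [Function.update_of_ne hq]; exact hemp q hq
      | readBuffer _ _ p' x v hl =>
        have hev' := hev ⟨p', MemAct.read x v⟩ (by simp)
        have hp : p' = p := hev'.1
        have hevt : ∀ e ∈ rest.reduceOption, MemEv.proc e = p ∧
            ((∃ x v, MemEv.act e = MemAct.write x v) ∨
              ∃ x v, MemEv.act e = MemAct.read x v) := by
          intro e he; exact hev e (by simp [he])
        rw [hp] at hl
        rw [List.reduceOption_cons_of_some, hp]
        refine CRuns.readB x v ?_ (ih _ _ _ buf fl hrest hbuf hm hemp hevt)
        rw [hbuf, bfilter_append]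
        have hl' : (bfilter (b' p) x).getLast? = some (x, v) := hl
        rw [List.getLast?_append, hl']
        rfl
      | readMemory _ _ p' x hl =>
        have hev' := hev ⟨p', MemAct.read x (m' x)⟩ (by simp)
        have hp : p' = p := hev'.1
        have hevt : ∀ e ∈ rest.reduceOption, MemEv.proc e = p ∧
            ((∃ x v, MemEv.act e = MemAct.write x v) ∨
              ∃ x v, MemEv.act e = MemAct.read x v) := by
          intro e he; exact hev e (by simp [he])
        rw [hp] at hl
        rw [List.reduceOption_cons_of_some, hp]
        have hbx : bfilter buf x = bfilter fl x := by
          rw [hbuf, bfilter_append, show bfilter (b' p) x = [] from hl, List.append_nil]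
        have htail : CRuns m p buf rest.reduceOption :=
          ih _ _ _ buf fl hrest hbuf hm hemp hevt
        rcases wAll_view fl m x with h | ⟨h1, h2⟩
        · have hmx : m' x = wAll m fl x := by rw [hm]
          rw [hmx]
          refine CRuns.readB x _ ?_ htail
          rw [hbx]; exact h
        · have hmx : m' x = m x := by rw [hm, h2]
          rw [hmx]
          refine CRuns.readM x ?_ htail
          rw [hbx]; exact h1
      | rmw _ _ p' x vnew hb =>
        have hev' := hev ⟨p', MemAct.rmw x (m' x) vnew⟩ (by simp)
        rcases hev'.2 with ⟨_, _, hc⟩ | ⟨_, _, hc⟩ <;> simp at hc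
      | fence _ _ p' hb =>
        have hev' := hev ⟨p', MemAct.fence⟩ (by simp)
        rcases hev'.2 with ⟨_, _, hc⟩ | ⟨_, _, hc⟩ <;> simp at hc
      | propagate _ _ p0 x v β hb =>
        by_cases hp0 : p0 = p
        · rw [hp0] at hb hrest
          have hro : ((none :: rest : List (Option (MemEv Proc Var Val)))).reduceOption
              = rest.reduceOption := by simp
          rw [hro]
          refine ih _ _ _ buf (fl ++ [(x, v)]) hrest ?_ ?_ ?_ (by
            intro e he; exact hev e (by rw [hro]; exact he))
          · rw [hbuf, hb, Function.update_self, List.append_assoc]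
            rfl
          · rw [wAll_append, ← hm]
            rfl
          · intro q hq; rw [Function.update_of_ne hq]; exact hemp q hq
        · exact absurd (hemp p0 hp0) (by rw [hb]; simp)

/-- Merging two lazy runs of distinct processes into a single TSO path without
silent steps. -/
lemma tso_merge_path (m : Var → Val) (b : Proc → List (Var × Val))
    (p1 p2 : Proc) (hne : p1 ≠ p2) (hb1 : b p1 = []) (hb2 : b p2 = []) :
    ∀ {s1 s2 s : List (MemEv Proc Var Val)}, Shuffle s1 s2 s →
      CRuns m p1 [] s1 → CRuns m p2 [] s2 →
      LTSPath (TSOStep Proc Var Val) (m, b) (s.map some)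
        (m, Function.update (Function.update b p1 (wlst s1)) p2 (wlst s2)) := by
  intro s1 s2 s hsh
  induction hsh with
  | nil =>
    intro _ _
    have e1 : Function.update b p1 (wlst ([] : List (MemEv Proc Var Val))) = b := by
      rw [wlst_nil, ← hb1, Function.update_eq_self]
    have e2 : Function.update b p2 (wlst ([] : List (MemEv Proc Var Val))) = b := by
      rw [wlst_nil, ← hb2, Function.update_eq_self]
    rw [e1, e2]
    exact LTSPath.nil _
  | @left s1' s2' s' x hsh' ih =>
    intro hc1 hc2
    obtain ⟨hA, hB⟩ := cruns_append m p1 s1' [x] [] hc1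
    simp only [List.nil_append] at hB
    have hpath := ih hA hc2
    set E : Proc → List (Var × Val) :=
      Function.update (Function.update b p1 (wlst s1')) p2 (wlst s2') with hE
    have hEp1 : E p1 = wlst s1' := by
      rw [hE, Function.update_of_ne hne, Function.update_self]
    rw [List.map_append]
    cases hB with
    | write y v h' =>
      refine ltspath_snoc hpath ?_
      have hst := TSOStep.write (Proc := Proc) m E p1 y v
      rw [hEp1] at hst
      have hgoal : Function.update E p1 (wlst s1' ++ [(y, v)]) =
          Function.update (Function.update b p1 (wlst (s1' ++ [⟨p1, MemAct.write y v⟩])))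
            p2 (wlst s2') := by
        rw [hE, Function.update_comm hne.symm, Function.update_idem, wlst_append]
        rfl
      rw [hgoal] at hst
      exact hst
    | readB y v hl h' =>
      have hst := TSOStep.readBuffer (Proc := Proc) m E p1 y v (by rw [hEp1]; exact hl)
      have : wlst (s1' ++ [⟨p1, MemAct.read y v⟩]) = wlst s1' := by
        rw [wlst_append]; simp [wlst, List.filterMap_cons]
      rw [this]
      exact ltspath_snoc hpath hst
    | readM y hl h' =>
      have hst := TSOStep.readMemory (Proc := Proc) m E p1 y (by rw [hEp1]; exact hl)
      have : wlst (s1' ++ [⟨p1, MemAct.read y (m y)⟩]) = wlst s1' := by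
        rw [wlst_append]; simp [wlst, List.filterMap_cons]
      rw [this]
      exact ltspath_snoc hpath hst
  | @right s1' s2' s' x hsh' ih =>
    intro hc1 hc2
    obtain ⟨hA, hB⟩ := cruns_append m p2 s2' [x] [] hc2
    simp only [List.nil_append] at hB
    have hpath := ih hc1 hA
    set E : Proc → List (Var × Val) :=
      Function.update (Function.update b p1 (wlst s1')) p2 (wlst s2') with hE
    have hEp2 : E p2 = wlst s2' := by
      rw [hE, Function.update_self]
    rw [List.map_append]
    cases hB with
    | write y v h' =>
      refine ltspath_snoc hpath ?_
      have hst := TSOStep.write (Proc := Proc) m E p2 y v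
      rw [hEp2] at hst
      have hgoal : Function.update E p2 (wlst s2' ++ [(y, v)]) =
          Function.update (Function.update b p1 (wlst s1'))
            p2 (wlst (s2' ++ [⟨p2, MemAct.write y v⟩])) := by
        rw [hE, Function.update_idem, wlst_append]
        rfl
      rw [hgoal] at hst
      exact hst
    | readB y v hl h' =>
      have hst := TSOStep.readBuffer (Proc := Proc) m E p2 y v (by rw [hEp2]; exact hl)
      have : wlst (s2' ++ [⟨p2, MemAct.read y v⟩]) = wlst s2' := by
        rw [wlst_append]; simp [wlst, List.filterMap_cons]
      rw [this]
      exact ltspath_snoc hpath hst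
    | readM y hl h' =>
      have hst := TSOStep.readMemory (Proc := Proc) m E p2 y (by rw [hEp2]; exact hl)
      have : wlst (s2' ++ [⟨p2, MemAct.read y (m y)⟩]) = wlst s2' := by
        rw [wlst_append]; simp [wlst, List.filterMap_cons]
      rw [this]
      exact ltspath_snoc hpath hst

lemma reduceOption_map_some {α : Type u} (s : List α) :
    (s.map some).reduceOption = s := by
  induction s with
  | nil => rfl
  | cons a t ih => simp [List.reduceOption, ih]

end TSOAux

/-- every two solo-RW observable memory sequences with disjoint
processes are strongly mergeable in TSO. -/
theorem tso_strong_merge (Proc Var Val : Type) [Fintype Proc] [DecidableEq Proc]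
    [DecidableEq Var] [Zero Val]
    (σ1 σ2 : List (MemEv Proc Var Val))
    (h1solo : IsSolo σ1) (h1rw : IsRW σ1)
    (h2solo : IsSolo σ2) (h2rw : IsRW σ2)
    (hdisj : memProcs σ1 ∩ memProcs σ2 = ∅) :
    StronglyMergeable (TSOModel Proc Var Val) σ1 σ2 := by
  intro q0 hstable h1 h2 σ hsh
  obtain ⟨m, b⟩ := q0
  -- all buffers empty in a stable state
  have hbe : ∀ p, b p = [] := by
    intro p
    cases hb : b p with
    | nil => rfl
    | cons pr β =>
      exact absurd (TSOStep.propagate m b p pr.1 pr.2 β (by rw [hb]))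
        (hstable _)
  rcases List.eq_nil_or_concat σ1 with h1nil | _
  · subst h1nil
    rw [shuffle_nil_left hsh rfl]
    exact h2
  rcases List.eq_nil_or_concat σ2 with h2nil | _
  · subst h2nil
    rw [shuffle_nil_right hsh rfl]
    exact h1
  -- both nonempty
  have hne1 : σ1 ≠ [] := by rename_i h _; obtain ⟨_, _, h⟩ := h; simp [h]
  have hne2 : σ2 ≠ [] := by rename_i h; obtain ⟨_, _, h⟩ := h; simp [h]
  obtain ⟨e1, t1, rfl⟩ := List.exists_cons_of_ne_nil hne1
  obtain ⟨e2, t2, rfl⟩ := List.exists_cons_of_ne_nil hne2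
  set p1 := e1.proc with hp1
  set p2 := e2.proc with hp2
  have hpne : p1 ≠ p2 := by
    intro hc
    have : p1 ∈ memProcs (e1 :: t1) ∩ memProcs (e2 :: t2) := by
      constructor
      · exact ⟨e1, by simp, rfl⟩
      · exact ⟨e2, by simp, hc.symm⟩
    rw [hdisj] at this
    exact this
  obtain ⟨π1, q1', hpath1, hred1⟩ := h1
  obtain ⟨π2, q2', hpath2, hred2⟩ := h2
  have hc1 : CRuns m p1 [] (e1 :: t1) := by
    rw [← hred1]
    refine tso_extract p1 m π1 m b q1' [] [] hpath1 (by rw [hbe p1]; rfl) rfl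
      (fun q _ => hbe q) ?_
    intro e he
    rw [hred1] at he
    refine ⟨h1solo e he e1 (by simp), ?_⟩
    rcases h1rw e he with hw | hr
    · exact Or.inl hw
    · exact Or.inr hr
  have hc2 : CRuns m p2 [] (e2 :: t2) := by
    rw [← hred2]
    refine tso_extract p2 m π2 m b q2' [] [] hpath2 (by rw [hbe p2]; rfl) rfl
      (fun q _ => hbe q) ?_
    intro e he
    rw [hred2] at he
    refine ⟨h2solo e he e2 (by simp), ?_⟩
    rcases h2rw e he with hw | hr
    · exact Or.inl hw
    · exact Or.inr hr
  have hpath := tso_merge_path m b p1 p2 hpne (hbe p1) (hbe p2) hsh hc1 hc2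
  exact ⟨σ.map some, _, hpath, reduceOption_map_some σ⟩

end WMM
end

section
/- Every solo-RWF-LTF observable memory sequence σ1 and every observable memory sequence σ2 with procs(σ1) ∩ procs(σ2) = ∅ are weakly mergeable in TSO. -/
set_option autoImplicit false

namespace WMM

universe u v

/-!
In a stable TSO state every store buffer is empty. A leading/trailing-fence sequence of reads,
writes and fences of one process `p` has the shape `F₁ ++ M ++ F₂` with `F₁`, `F₂` made of fences
and `M` of reads and writes. Along a run in which only `p` acts, main memory overlaid with `p`'s
buffer evolves as sequentially consistent memory, so the reads of `M` are the SC reads from the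
initial memory. So from `q₀` one can run `F₁`, then `M` with every write held back in `p`'s
buffer, then the run of `σ₂`, which cannot see that buffer, then drain the buffer and run `F₂`:
this realises the interleaving `F₁ ++ M ++ σ₂ ++ F₂`.
-/

theorem LTSPath.append_iff {S : Type u} {L : Type v} {step : S → L → S → Prop} {s s'' : S}
    {π₁ π₂ : List L} :
    LTSPath step s (π₁ ++ π₂) s'' ↔ ∃ s', LTSPath step s π₁ s' ∧ LTSPath step s' π₂ s'' := by
  induction π₁ generalizing s with
  | nil => exact ⟨fun h => ⟨s, .nil s, h⟩, fun ⟨_, h₁, h₂⟩ => by cases h₁; exact h₂⟩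
  | cons l π₁ ih =>
    constructor
    · rintro (_ | ⟨hstep, hrest⟩)
      obtain ⟨s', h₁, h₂⟩ := ih.mp hrest
      exact ⟨s', .cons hstep h₁, h₂⟩
    · rintro ⟨s', _ | ⟨hstep, h₁⟩, h₂⟩
      exact .cons hstep (ih.mpr ⟨s', h₁, h₂⟩)

theorem LTSPath.append_s3 {S : Type u} {L : Type v} {step : S → L → S → Prop} {s s' s'' : S}
    {π₁ π₂ : List L} (h₁ : LTSPath step s π₁ s') (h₂ : LTSPath step s' π₂ s'') :
    LTSPath step s (π₁ ++ π₂) s'' :=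
  LTSPath.append_iff.mpr ⟨s', h₁, h₂⟩

section Shuffle

variable {α : Type u}

theorem Shuffle.append_left_s3 {s₁ s₂ s : List α} (h : Shuffle s₁ s₂ s) (t : List α) :
    Shuffle (s₁ ++ t) s₂ (s ++ t) := by
  induction t using List.reverseRecOn with
  | nil => simpa using h
  | append_singleton t x ih => simpa only [← List.append_assoc] using ih.left x

theorem Shuffle.append_right_s3 {s₁ s₂ s : List α} (h : Shuffle s₁ s₂ s) (t : List α) :
    Shuffle s₁ (s₂ ++ t) (s ++ t) := by
  induction t using List.reverseRecOn with
  | nil => simpa using h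
  | append_singleton t x ih => simpa only [← List.append_assoc] using ih.right x

theorem Shuffle.nil_left (s : List α) : Shuffle [] s s := by
  simpa using Shuffle.nil.append_right_s3 s

theorem Shuffle.nil_right_s3 (s : List α) : Shuffle s [] s := by
  simpa using Shuffle.nil.append_left_s3 s

theorem Shuffle.insert (s t u : List α) : Shuffle (s ++ t) u (s ++ u ++ t) := by
  simpa using ((Shuffle.nil_right_s3 s).append_right_s3 u).append_left_s3 t

end Shuffle

theorem exists_eq_append_of_forall_pred_succ_imp {α : Type u} (P : α → Prop) :
    ∀ l : List α, (∀ k a b, l[k]? = some a → l[k + 1]? = some b → P b → P a) →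
      ∃ l₁ l₂, l = l₁ ++ l₂ ∧ (∀ a ∈ l₁, P a) ∧ ∀ a ∈ l₂, ¬ P a
  | [], _ => ⟨[], [], rfl, by simp, by simp⟩
  | a :: l, h => by
    obtain ⟨l₁, l₂, rfl, h₁, h₂⟩ :=
      exists_eq_append_of_forall_pred_succ_imp P l fun k => h (k + 1)
    by_cases ha : P a
    · exact ⟨a :: l₁, l₂, rfl, by simpa [ha] using h₁, h₂⟩
    · refine ⟨[], a :: (l₁ ++ l₂), rfl, by simp, ?_⟩
      rcases l₁ with _ | ⟨b, l₁⟩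
      · simpa [ha] using h₂
      · exact absurd (h 0 a b rfl rfl (h₁ b (by simp))) ha

section Patterns

variable {Proc Var Val : Type}

theorem IsLTF.exists_eq_append {σ : List (MemEv Proc Var Val)} (h : IsLTF σ) :
    ∃ F₁ M F₂, σ = F₁ ++ M ++ F₂ ∧ (∀ e ∈ F₁, e.isFence) ∧ (∀ e ∈ M, ¬ e.isFence) ∧
      ∀ e ∈ F₂, e.isFence := by
  obtain ⟨σ', σ'', rfl, hLF, hTF⟩ := h
  obtain ⟨F₁, A, rfl, hF₁, hA⟩ := exists_eq_append_of_forall_pred_succ_imp _ σ' hLF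
  obtain ⟨B, F₂, rfl, hB, hF₂⟩ := exists_eq_append_of_forall_pred_succ_imp (¬ MemEv.isFence ·) σ''
    fun k a b ha hb => mt (hTF k a b ha hb)
  refine ⟨F₁, A ++ B, F₂, by simp, hF₁, ?_, fun e he => not_not.mp (hF₂ e he)⟩
  simpa [or_imp, forall_and] using ⟨hA, hB⟩

end Patterns

section SCM

variable {Proc Var Val : Type} [DecidableEq Var]

theorem eq_of_scmPath_fences {F : List (MemEv Proc Var Val)} (hF : ∀ e ∈ F, e.isFence)
    {ε ε' : Var → Val} (h : LTSPath (SCMStep Proc Var Val) ε (F.map some) ε') : ε' = ε := by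
  induction F generalizing ε with
  | nil => cases h; rfl
  | cons e F ih =>
    obtain ⟨q, a⟩ := e
    obtain rfl : a = .fence := hF _ List.mem_cons_self
    rcases h with _ | ⟨⟨⟩, hrest⟩
    exact ih (fun e he => hF e (List.mem_cons_of_mem _ he)) hrest

end SCM

section TSO

variable {Proc Var Val : Type} [DecidableEq Proc] [DecidableEq Var]

def applyBuffer (m : Var → Val) (β : List (Var × Val)) : Var → Val :=
  β.foldl (fun m xv => Function.update m xv.1 xv.2) m

theorem applyBuffer_append_singleton (m : Var → Val) (β : List (Var × Val)) (x : Var)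
    (v : Val) :
    applyBuffer m (β ++ [(x, v)]) = Function.update (applyBuffer m β) x v := by
  simp [applyBuffer]

theorem applyBuffer_apply (m : Var → Val) (β : List (Var × Val)) (x : Var) :
    applyBuffer m β x = ((β.filter (·.1 = x)).getLast?.map Prod.snd).getD (m x) := by
  induction β using List.reverseRecOn with
  | nil => rfl
  | append_singleton β yv ih =>
    obtain ⟨y, v⟩ := yv
    rw [applyBuffer_append_singleton]
    by_cases hyx : y = x
    · subst hyx; simp
    · simp [hyx, Function.update_of_ne (Ne.symm hyx), ih]

theorem TSOStep.read_applyBuffer (m : Var → Val) (b : Proc → List (Var × Val)) (p : Proc)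
    (x : Var) :
    TSOStep Proc Var Val (m, b) (some ⟨p, .read x (applyBuffer m (b p) x)⟩) (m, b) := by
  rcases hlast : ((b p).filter (·.1 = x)).getLast? with _ | ⟨y, v⟩
  · rw [applyBuffer_apply, hlast]
    exact .readMemory m b p x (List.getLast?_eq_none_iff.mp hlast)
  · have hy : y = x := by simpa using (List.mem_filter.mp (List.mem_of_getLast? hlast)).2
    subst hy
    rw [applyBuffer_apply, hlast]
    exact .readBuffer m b p y v hlast

theorem TSOStep.scmPath_of_solo (p : Proc) {s s' : (Var → Val) × (Proc → List (Var × Val))}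
    {l : Option (MemEv Proc Var Val)} (h : TSOStep Proc Var Val s l s')
    (hl : ∀ e ∈ l, e.proc = p) (hb : ∀ q ≠ p, s.2 q = []) :
    (∀ q ≠ p, s'.2 q = []) ∧
      LTSPath (SCMStep Proc Var Val) (applyBuffer s.1 (s.2 p)) (l.toList.map some)
        (applyBuffer s'.1 (s'.2 p)) := by
  cases h with
  | write m b q x v =>
    obtain rfl : q = p := hl _ rfl
    refine ⟨fun r hr => by simpa [Function.update_of_ne hr] using hb r hr, ?_⟩
    simpa [applyBuffer_append_singleton] using .cons (.write _ q x v) (.nil _)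
  | readBuffer m b q x v hlast =>
    obtain rfl : q = p := hl _ rfl
    have hv : applyBuffer m (b q) x = v := by rw [applyBuffer_apply, hlast]; rfl
    exact ⟨hb, .cons (hv ▸ .read _ q x) (.nil _)⟩
  | readMemory m b q x hnil =>
    obtain rfl : q = p := hl _ rfl
    have hv : applyBuffer m (b q) x = m x := by rw [applyBuffer_apply, hnil]; rfl
    exact ⟨hb, .cons (hv ▸ .read _ q x) (.nil _)⟩
  | rmw m b q x vnew hbq =>
    obtain rfl : q = p := hl _ rfl
    refine ⟨hb, ?_⟩
    simpa [hbq, applyBuffer] using .cons (.rmw m q x vnew) (.nil _)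
  | fence m b q hbq => exact ⟨hb, .cons (.fence _ q) (.nil _)⟩
  | propagate m b q x v β hbq =>
    obtain rfl : q = p := by_contra fun hq => by simp [show b q = [] from hb q hq] at hbq
    refine ⟨fun r hr => by simpa [Function.update_of_ne hr] using hb r hr, ?_⟩
    simpa [hbq, applyBuffer] using LTSPath.nil (step := SCMStep Proc Var Val) _

theorem scmPath_of_tsoPath_solo (p : Proc) {s s' : (Var → Val) × (Proc → List (Var × Val))}
    {π : List (Option (MemEv Proc Var Val))} (h : LTSPath (TSOStep Proc Var Val) s π s')
    (hπ : ∀ e ∈ π.reduceOption, e.proc = p) (hb : ∀ q ≠ p, s.2 q = []) :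
    LTSPath (SCMStep Proc Var Val) (applyBuffer s.1 (s.2 p)) (π.reduceOption.map some)
      (applyBuffer s'.1 (s'.2 p)) := by
  induction h with
  | nil => exact .nil _
  | @cons s s₁ s'' l π hstep _ ih =>
    have hred : (l :: π).reduceOption = l.toList ++ π.reduceOption := by
      cases l <;> simp [List.reduceOption_cons_of_none, List.reduceOption_cons_of_some]
    rw [hred] at hπ ⊢
    obtain ⟨hb₁, hstep⟩ := hstep.scmPath_of_solo p (fun e he => hπ e (by simp_all)) hb
    rw [List.map_append, LTSPath.append_iff]
    exact ⟨_, hstep, ih (fun e he => hπ e (by simp [he])) hb₁⟩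

theorem tsoPath_of_scmPath_solo (p : Proc) {σ : List (MemEv Proc Var Val)}
    (hσ : ∀ e ∈ σ, e.proc = p ∧ (e.isWrite ∨ e.isRead)) {ε ε' : Var → Val}
    (h : LTSPath (SCMStep Proc Var Val) ε (σ.map some) ε')
    (m : Var → Val) (b : Proc → List (Var × Val)) (hε : applyBuffer m (b p) = ε) :
    ∃ β, LTSPath (TSOStep Proc Var Val) (m, b) (σ.map some) (m, Function.update b p β) := by
  induction σ generalizing ε b with
  | nil => exact ⟨b p, by simpa using LTSPath.nil _⟩
  | cons e σ ih =>
    obtain ⟨q, a⟩ := e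
    obtain ⟨rfl, hrw⟩ := hσ _ List.mem_cons_self
    have hσ' := fun e he => hσ e (List.mem_cons_of_mem _ he)
    rcases hrw with ⟨x, v, rfl⟩ | ⟨x, v, rfl⟩
    · rcases h with _ | ⟨⟨⟩, hrest⟩
      obtain ⟨β, hpath⟩ := ih hσ' hrest (Function.update b q (b q ++ [(x, v)]))
        (by rw [Function.update_self, applyBuffer_append_singleton, hε])
      exact ⟨β, .cons (.write m b q x v) (by simpa using hpath)⟩
    · rcases h with _ | ⟨⟨⟩, hrest⟩
      obtain ⟨β, hpath⟩ := ih hσ' hrest b hε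
      exact ⟨β, .cons (hε ▸ TSOStep.read_applyBuffer m b q x) hpath⟩

theorem TSOStep.update_buffer (p : Proc) (w : List (Var × Val))
    {s s' : (Var → Val) × (Proc → List (Var × Val))} {l : Option (MemEv Proc Var Val)}
    (h : TSOStep Proc Var Val s l s') (hl : ∀ e ∈ l, e.proc ≠ p) (hb : s.2 p = []) :
    s'.2 p = [] ∧ TSOStep Proc Var Val (s.1, Function.update s.2 p w) l
      (s'.1, Function.update s'.2 p w) := by
  cases h with
  | write m b q x v =>
    have hq : q ≠ p := hl _ rfl
    refine ⟨by simpa [Function.update_of_ne hq.symm] using hb, ?_⟩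
    simpa [Function.update_of_ne hq, Function.update_comm hq] using
      TSOStep.write m (Function.update b p w) q x v
  | readBuffer m b q x v hlast =>
    exact ⟨hb, .readBuffer _ _ q x v (by rwa [Function.update_of_ne (hl _ rfl)])⟩
  | readMemory m b q x hnil =>
    exact ⟨hb, .readMemory _ _ q x (by rwa [Function.update_of_ne (hl _ rfl)])⟩
  | rmw m b q x vnew hbq =>
    exact ⟨hb, .rmw _ _ q x vnew (by rwa [Function.update_of_ne (hl _ rfl)])⟩
  | fence m b q hbq =>
    exact ⟨hb, .fence _ _ q (by rwa [Function.update_of_ne (hl _ rfl)])⟩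
  | propagate m b q x v β hbq =>
    have hq : q ≠ p := by rintro rfl; simp [show b q = [] from hb] at hbq
    refine ⟨by simpa [Function.update_of_ne hq.symm] using hb, ?_⟩
    simpa [Function.update_comm hq] using
      TSOStep.propagate m (Function.update b p w) q x v β (by rwa [Function.update_of_ne hq])

theorem tsoPath_update_buffer (p : Proc) (w : List (Var × Val))
    {s s' : (Var → Val) × (Proc → List (Var × Val))} {π : List (Option (MemEv Proc Var Val))}
    (h : LTSPath (TSOStep Proc Var Val) s π s') (hπ : ∀ e ∈ π.reduceOption, e.proc ≠ p)
    (hb : s.2 p = []) :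
    LTSPath (TSOStep Proc Var Val) (s.1, Function.update s.2 p w) π
      (s'.1, Function.update s'.2 p w) := by
  induction h with
  | nil => exact .nil _
  | cons hstep _ ih =>
    simp only [List.reduceOption_mem_iff, List.mem_cons] at hπ
    obtain ⟨hb₁, hstep⟩ := hstep.update_buffer p w (fun e he => hπ e (.inl he.symm)) hb
    exact .cons hstep (ih (fun e he => hπ e (.inr (List.reduceOption_mem_iff.mp he))) hb₁)

theorem tsoPath_flush (p : Proc) (m : Var → Val) (b : Proc → List (Var × Val)) :
    ∃ n m', LTSPath (TSOStep Proc Var Val) (m, b) (List.replicate n none)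
      (m', Function.update b p []) := by
  induction hβ : b p generalizing m b with
  | nil => exact ⟨0, m, by simpa [← hβ] using LTSPath.nil _⟩
  | cons xv β ih =>
    obtain ⟨n, m', hpath⟩ := ih (Function.update m xv.1 xv.2) (Function.update b p β) (by simp)
    rw [Function.update_idem] at hpath
    exact ⟨n + 1, m', .cons (.propagate m b p xv.1 xv.2 β hβ) hpath⟩

theorem tsoPath_fences (p : Proc) {F : List (MemEv Proc Var Val)}
    (hF : ∀ e ∈ F, e.proc = p ∧ e.isFence) (m : Var → Val) {b : Proc → List (Var × Val)}
    (hb : b p = []) : LTSPath (TSOStep Proc Var Val) (m, b) (F.map some) (m, b) := by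
  induction F with
  | nil => exact .nil _
  | cons e F ih =>
    obtain ⟨q, a⟩ := e
    obtain ⟨rfl, rfl⟩ : q = p ∧ a = .fence := hF _ List.mem_cons_self
    exact .cons (.fence m b q hb) (ih fun e he => hF e (List.mem_cons_of_mem _ he))

theorem TSOModel.buffer_eq_nil_of_stable [Zero Val] {q : (TSOModel Proc Var Val).State}
    (hq : (TSOModel Proc Var Val).Stable q) (p : Proc) : q.2 p = [] := by
  rcases hβ : q.2 p with _ | ⟨⟨x, v⟩, β⟩
  · rfl
  · exact absurd (TSOStep.propagate q.1 q.2 p x v β hβ) (hq _)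

theorem TSOModel.merge_mem_oTraces_of_fenced_solo [Zero Val] (p : Proc)
    {F₁ M F₂ σ₂ : List (MemEv Proc Var Val)} (hF₁ : ∀ e ∈ F₁, e.proc = p ∧ e.isFence)
    (hM : ∀ e ∈ M, e.proc = p ∧ (e.isWrite ∨ e.isRead))
    (hF₂ : ∀ e ∈ F₂, e.proc = p ∧ e.isFence)
    (hσ₂ : ∀ e ∈ σ₂, e.proc ≠ p) {q₀ : (TSOModel Proc Var Val).State}
    (hq₀ : (TSOModel Proc Var Val).Stable q₀)
    (h₁ : F₁ ++ M ++ F₂ ∈ (TSOModel Proc Var Val).OTraces q₀)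
    (h₂ : σ₂ ∈ (TSOModel Proc Var Val).OTraces q₀) :
    F₁ ++ M ++ σ₂ ++ F₂ ∈ (TSOModel Proc Var Val).OTraces q₀ := by
  have hb₀ := TSOModel.buffer_eq_nil_of_stable hq₀
  obtain ⟨π₁, _, hπ₁, hred₁⟩ := h₁
  obtain ⟨π₂, s₂, hπ₂, rfl⟩ := h₂
  have hsc := scmPath_of_tsoPath_solo p hπ₁
    (fun e he => by
      rw [hred₁] at he
      rcases List.mem_append.mp he with he | he
      · rcases List.mem_append.mp he with he | he
        exacts [(hF₁ e he).1, (hM e he).1]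
      · exact (hF₂ e he).1)
    (fun q _ => hb₀ q)
  rw [hred₁, hb₀ p, List.map_append, List.map_append] at hsc
  obtain ⟨_, hF₁Msc, -⟩ := LTSPath.append_iff.mp hsc
  obtain ⟨_, hF₁sc, hMsc⟩ := LTSPath.append_iff.mp hF₁Msc
  obtain rfl := eq_of_scmPath_fences (fun e he => (hF₁ e he).2) hF₁sc
  obtain ⟨β, hMtso⟩ := tsoPath_of_scmPath_solo p hM hMsc q₀.1 q₀.2 (by rw [hb₀ p])
  obtain ⟨n, m, hflush⟩ := tsoPath_flush p s₂.1 (Function.update s₂.2 p β)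
  rw [Function.update_idem] at hflush
  refine ⟨F₁.map some ++ M.map some ++ π₂ ++ List.replicate n none ++ F₂.map some,
    (m, Function.update s₂.2 p []), ?_, ?_⟩
  · exact ((((tsoPath_fences p hF₁ q₀.1 (hb₀ p)).append_s3 hMtso).append_s3
      (tsoPath_update_buffer p β hπ₂ hσ₂ (hb₀ p))).append_s3 hflush).append_s3
      (tsoPath_fences p hF₂ m (Function.update_self _ _ _))
  · simp [List.reduceOption, List.filterMap_map]

end TSO

theorem tso_weak_merge_general (Proc Var Val : Type) [DecidableEq Proc]
    [DecidableEq Var] [Zero Val]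
    (σ1 σ2 : List (MemEv Proc Var Val))
    (h1solo : IsSolo σ1) (h1rwf : IsRWF σ1) (h1ltf : IsLTF σ1)
    (hdisj : memProcs σ1 ∩ memProcs σ2 = ∅) :
    WeaklyMergeable (TSOModel Proc Var Val) σ1 σ2 := by
  intro q₀ hq₀ h₁ h₂
  rcases eq_or_ne σ1 [] with rfl | hne
  · exact ⟨σ2, Shuffle.nil_left σ2, h₂⟩
  obtain ⟨e₀, he₀⟩ := List.exists_mem_of_ne_nil σ1 hne
  have hσ1 : ∀ e ∈ σ1, e.proc = e₀.proc := fun e he => h1solo e he e₀ he₀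
  have hσ2 : ∀ e ∈ σ2, e.proc ≠ e₀.proc := fun e he hp =>
    (Set.eq_empty_iff_forall_notMem.mp hdisj) e₀.proc ⟨⟨e₀, he₀, rfl⟩, e, he, hp⟩
  obtain ⟨F₁, M, F₂, rfl, hF₁, hM, hF₂⟩ := h1ltf.exists_eq_append
  have hM' : ∀ e ∈ M, e.isWrite ∨ e.isRead := fun e he => by
    rcases h1rwf e (by simp [he]) with h | h | h
    exacts [.inl h, .inr h, absurd h (hM e he)]
  refine ⟨F₁ ++ M ++ σ2 ++ F₂, by simpa using Shuffle.insert (F₁ ++ M) F₂ σ2, ?_⟩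
  exact TSOModel.merge_mem_oTraces_of_fenced_solo e₀.proc
    (fun e he => ⟨hσ1 e (by simp [he]), hF₁ e he⟩) (fun e he => ⟨hσ1 e (by simp [he]), hM' e he⟩)
    (fun e he => ⟨hσ1 e (by simp [he]), hF₂ e he⟩) hσ2 hq₀ h₁ h₂

/-- every solo-RWF-LTF observable memory sequence `σ1` and every
observable memory sequence `σ2` with disjoint processes are weakly mergeable in TSO. -/
theorem tso_weak_merge (Proc Var Val : Type) [Fintype Proc] [DecidableEq Proc]
    [DecidableEq Var] [Zero Val]
    (σ1 σ2 : List (MemEv Proc Var Val))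
    (h1solo : IsSolo σ1) (h1rwf : IsRWF σ1) (h1ltf : IsLTF σ1)
    (hdisj : memProcs σ1 ∩ memProcs σ2 = ∅) :
    WeaklyMergeable (TSOModel Proc Var Val) σ1 σ2 :=
  tso_weak_merge_general Proc Var Val σ1 σ2 h1solo h1rwf h1ltf hdisj

end WMM
end
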